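/- arXiv:1301.2195 — 5 statements merged into one kernel-verified Lean document; each statement's English description precedes it below -/
import Mathlib

section
/- Every subgraph G of the hypercube Q_n with average degree d contains a geodesic path of length at least d (a path in which no two edges have the same coordinate direction). -/
/-!
Edges of `Q n` in a fixed direction form a matching. Remove from `G` an edge `xy` of maximal
direction: a longest path with increasing directions ending at `y` in what remains has its last
edge at `y` in a smaller direction (the only edge at `y` in the direction of `xy` is `xy`), so it
extends by `xy` to such a path ending at `x`, and symmetrically. Hence the sum over all vertices
of `maxInc G` grows by at least 2 per edge, which gives
`2 |E(G)| ≤ ∑ v, maxInc G v ≤ |V(G)| · max_v maxInc G v`. Increasing directions are distinct, so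
a longest such path is a geodesic of length at least the average degree.
-/

open SimpleGraph Finset
open scoped symmDiff

/-- The hypercube `Q_n` on vertex set `{0,1}^n`: two vertices are adjacent iff they
differ in exactly one coordinate. -/
def Q (n : ℕ) : SimpleGraph (Fin n → Bool) where
  Adj x y := hammingDist x y = 1
  symm := ⟨fun x y h => (hammingDist_comm y x).trans h⟩
  loopless := ⟨fun x h => by simp at h⟩

/-- The coordinate direction of a step from `x` to `y` (for an edge of `Q n`, the unique
coordinate where they differ), as a natural number. -/
def dir {n : ℕ} (x y : Fin n → Bool) : ℕ :=
  (Finset.univ.filter fun i => x i ≠ y i).sup fun i => (i : ℕ)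

/-- The list of coordinate directions of the edges of a walk in `Q n`. -/
def dirs {n : ℕ} {u v : Fin n → Bool} (p : (Q n).Walk u v) : List ℕ :=
  p.darts.map fun d => dir d.fst d.snd

/-- A geodesic in `Q n`: a path no two of whose edges lie in the same coordinate
direction. -/
def IsGeodesic {n : ℕ} {u v : Fin n → Bool} (p : (Q n).Walk u v) : Prop :=
  p.IsPath ∧ (dirs p).Nodup

/-- An increasing geodesic in `Q n`: a path whose successive edge directions strictly
increase. -/
def IsIncGeodesic {n : ℕ} {u v : Fin n → Bool} (p : (Q n).Walk u v) : Prop :=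
  p.IsPath ∧ (dirs p).Chain' (· < ·)

/-- `maxInc G x` is the maximum length of an increasing geodesic contained in the
subgraph `G` of `Q n` and ending at the vertex `x`. -/
noncomputable def maxInc {n : ℕ} (G : (Q n).Subgraph) (x : Fin n → Bool) : ℕ :=
  sSup {l | ∃ u, ∃ p : (Q n).Walk u x, p.toSubgraph ≤ G ∧ IsIncGeodesic p ∧ p.length = l}

namespace SimpleGraph.Subgraph

theorem edgeSet_deleteEdges {V : Type*} {G : SimpleGraph V} (H : G.Subgraph) (s : Set (Sym2 V)) :
    (H.deleteEdges s).edgeSet = H.edgeSet \ s := by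
  ext e
  induction e using Sym2.ind with
  | _ x y => simp

end SimpleGraph.Subgraph

section Hypercube

variable {n : ℕ}

lemma dir_comm (x y : Fin n → Bool) : dir x y = dir y x := by
  simp only [dir, ne_comm]

lemma dir_eq_of_adj_of_apply_ne {x y : Fin n → Bool} (h : (Q n).Adj x y) {i : Fin n}
    (hi : x i ≠ y i) : dir x y = i := by
  obtain ⟨j, hj⟩ := Finset.card_eq_one.mp (show hammingDist x y = 1 from h)
  have hij : i ∈ univ.filter fun k => x k ≠ y k := by simpa using hi
  rw [hj, mem_singleton] at hij
  simp [dir, hj, hij]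

lemma apply_eq_of_adj_of_ne_dir {x y : Fin n → Bool} (h : (Q n).Adj x y) {j : Fin n}
    (hj : (j : ℕ) ≠ dir x y) : x j = y j :=
  not_not.mp fun hne => hj (dir_eq_of_adj_of_apply_ne h hne).symm

lemma eq_of_adj_of_dir_eq {x y z : Fin n → Bool} (hy : (Q n).Adj x y) (hz : (Q n).Adj x z)
    (hd : dir x y = dir x z) : y = z := by
  obtain ⟨i, hi⟩ := Function.ne_iff.mp ((Q n).ne_of_adj hy)
  obtain ⟨k, hk⟩ := Function.ne_iff.mp ((Q n).ne_of_adj hz)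
  obtain rfl : k = i := Fin.ext <| by
    rw [← dir_eq_of_adj_of_apply_ne hz hk, ← hd, dir_eq_of_adj_of_apply_ne hy hi]
  funext j
  by_cases hj : j = k
  · subst hj
    exact (Bool.eq_not_of_ne hi.symm).trans (Bool.eq_not_of_ne hk.symm).symm
  · have hj' : (j : ℕ) ≠ dir x y := by
      rw [dir_eq_of_adj_of_apply_ne hy hi]; exact Fin.val_ne_of_ne hj
    exact (apply_eq_of_adj_of_ne_dir hy hj').symm.trans (apply_eq_of_adj_of_ne_dir hz (hd ▸ hj'))

variable {u v w : Fin n → Bool}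

lemma dirs_cons (h : (Q n).Adj u v) (p : (Q n).Walk v w) :
    dirs (Walk.cons h p) = dir u v :: dirs p := rfl

lemma dirs_append (p : (Q n).Walk u v) (q : (Q n).Walk v w) :
    dirs (p.append q) = dirs p ++ dirs q := by
  simp [dirs]

lemma dirs_concat (p : (Q n).Walk u v) (h : (Q n).Adj v w) :
    dirs (p.concat h) = dirs p ++ [dir v w] := by
  simp [dirs]

lemma apply_eq_of_notMem_dirs (p : (Q n).Walk u v) {j : Fin n} (hj : (j : ℕ) ∉ dirs p) :
    u j = v j := by
  induction p with
  | nil => rfl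
  | cons h q ih =>
    rw [dirs_cons, List.mem_cons, not_or] at hj
    exact (apply_eq_of_adj_of_ne_dir h hj.1).trans (ih hj.2)

lemma isPath_of_nodup_dirs (p : (Q n).Walk u v) (hp : (dirs p).Nodup) : p.IsPath := by
  classical
  induction p with
  | nil => exact .nil
  | @cons u w v h q ih =>
    rw [dirs_cons, List.nodup_cons] at hp
    refine (Walk.cons_isPath_iff h q).mpr ⟨ih hp.2, fun hu => ?_⟩
    -- Returning to `u` along `q` would flip back coordinate `dir u w`, which `q` never uses.
    obtain ⟨i, hi⟩ := Function.ne_iff.mp ((Q n).ne_of_adj h)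
    have hsub : (dirs (q.takeUntil u hu)).Sublist (dirs q) := by
      conv_rhs => rw [← q.take_spec hu, dirs_append]
      exact List.sublist_append_left _ _
    refine hi (apply_eq_of_notMem_dirs (q.takeUntil u hu) fun hmem => hp.1 ?_).symm
    rw [dir_eq_of_adj_of_apply_ne h hi]
    exact hsub.subset hmem

lemma isIncGeodesic_of_isChain (p : (Q n).Walk u v) (hp : (dirs p).IsChain (· < ·)) :
    IsIncGeodesic p :=
  ⟨isPath_of_nodup_dirs p ((List.isChain_iff_pairwise.mp hp).imp ne_of_lt), hp⟩

lemma IsIncGeodesic.isGeodesic {p : (Q n).Walk u v} (hp : IsIncGeodesic p) : IsGeodesic p :=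
  ⟨hp.1, (List.isChain_iff_pairwise.mp hp.2).imp ne_of_lt⟩

lemma IsIncGeodesic.concat {p : (Q n).Walk u v} (hp : IsIncGeodesic p) (h : (Q n).Adj v w)
    (hlast : ∀ a ∈ (dirs p).getLast?, a < dir v w) : IsIncGeodesic (p.concat h) := by
  refine isIncGeodesic_of_isChain _ ?_
  rw [dirs_concat, List.isChain_append]
  exact ⟨hp.2, List.isChain_singleton _, by simpa using hlast⟩

lemma bddAbove_maxInc_set (G : (Q n).Subgraph) (x : Fin n → Bool) :
    BddAbove {l | ∃ u, ∃ p : (Q n).Walk u x, p.toSubgraph ≤ G ∧ IsIncGeodesic p ∧ p.length = l} :=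
  ⟨Fintype.card (Fin n → Bool), by rintro _ ⟨u, p, -, hp, rfl⟩; exact hp.1.length_lt.le⟩

lemma length_le_maxInc {G : (Q n).Subgraph} (p : (Q n).Walk u v) (hG : p.toSubgraph ≤ G)
    (hp : IsIncGeodesic p) : p.length ≤ maxInc G v :=
  le_csSup (bddAbove_maxInc_set G v) ⟨u, p, hG, hp, rfl⟩

lemma exists_isIncGeodesic_length_eq_maxInc {G : (Q n).Subgraph} (hv : v ∈ G.verts) :
    ∃ u, ∃ p : (Q n).Walk u v, p.toSubgraph ≤ G ∧ IsIncGeodesic p ∧ p.length = maxInc G v := by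
  refine Nat.sSup_mem ?_ (bddAbove_maxInc_set G v)
  exact ⟨0, v, .nil, by simpa using hv, isIncGeodesic_of_isChain _ List.isChain_nil, rfl⟩

lemma maxInc_mono {G G' : (Q n).Subgraph} (h : G' ≤ G) (v : Fin n → Bool) :
    maxInc G' v ≤ maxInc G v :=
  csSup_le_csSup' (bddAbove_maxInc_set G v) fun _ ⟨u, p, hp, hinc, hl⟩ ↦
    ⟨u, p, hp.trans h, hinc, hl⟩

lemma mem_verts_of_maxInc_ne_zero {G : (Q n).Subgraph} (h : maxInc G v ≠ 0) : v ∈ G.verts := by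
  rcases Set.eq_empty_or_nonempty
    {l | ∃ u, ∃ p : (Q n).Walk u v, p.toSubgraph ≤ G ∧ IsIncGeodesic p ∧ p.length = l}
    with hS | ⟨_, u, p, hG, -⟩
  · exact absurd (by rw [maxInc, hS, csSup_empty]; rfl) h
  · exact Subgraph.verts_mono hG p.end_mem_verts_toSubgraph

lemma maxInc_deleteEdges_add_one_le {H : (Q n).Subgraph} {x y : Fin n → Bool} (hxy : H.Adj x y)
    (hmax : ∀ z w, H.Adj z w → dir z w ≤ dir x y) :
    maxInc (H.deleteEdges {s(x, y)}) y + 1 ≤ maxInc H x := by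
  set H' := H.deleteEdges {s(x, y)}
  obtain ⟨u, p, hpH', hp, hlen⟩ :=
    exists_isIncGeodesic_length_eq_maxInc (show y ∈ H'.verts from H.edge_vert hxy.symm)
  have hyx : (Q n).Adj y x := (H.adj_sub hxy).symm
  have hlast : ∀ a ∈ (dirs p).getLast?, a < dir y x := by
    cases p using Walk.concatRec with
    | Hnil => simp [dirs]
    | @Hconcat u z y p₀ hzy =>
      have hzy' : s(z, y) ∈ H'.edgeSet :=
        Subgraph.edgeSet_mono hpH' ((p₀.concat hzy).mem_edges_toSubgraph.mpr (by simp))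
      rw [Subgraph.mem_edgeSet, Subgraph.deleteEdges_adj] at hzy'
      simp only [dirs_concat, List.getLast?_concat, Option.mem_some_iff, forall_eq']
      refine lt_of_le_of_ne ((hmax z y hzy'.1).trans_eq (dir_comm x y)) fun heq => hzy'.2 ?_
      rw [dir_comm] at heq
      rw [eq_of_adj_of_dir_eq hzy.symm hyx heq]
      rfl
  calc maxInc H' y + 1 = (p.concat hyx).length := by rw [Walk.length_concat, hlen]
    _ ≤ maxInc H x := by
      refine length_le_maxInc _ ?_ (hp.concat hyx hlast)
      rw [Walk.concat, Walk.toSubgraph_append, Walk.toSubgraph_cons_nil_eq_subgraphOfAdj]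
      exact sup_le (hpH'.trans (H.deleteEdges_le _)) (subgraphOfAdj_le_of_adj H hxy.symm)

lemma sum_maxInc_deleteEdges_add_two_le {H : (Q n).Subgraph} {x y : Fin n → Bool}
    (hxy : H.Adj x y) (hmax : ∀ z w, H.Adj z w → dir z w ≤ dir x y) :
    ∑ v, maxInc (H.deleteEdges {s(x, y)}) v + 2 ≤ ∑ v, maxInc H v := by
  set H' := H.deleteEdges {s(x, y)}
  have hx : maxInc H' y + 1 ≤ maxInc H x := maxInc_deleteEdges_add_one_le hxy hmax
  have hy : maxInc H' x + 1 ≤ maxInc H y := by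
    simpa only [H', Sym2.eq_swap] using maxInc_deleteEdges_add_one_le hxy.symm
      fun z w h => (hmax z w h).trans_eq (dir_comm x y)
  have hrest : ∑ v ∈ (univ.erase x).erase y, maxInc H' v ≤
      ∑ v ∈ (univ.erase x).erase y, maxInc H v :=
    sum_le_sum fun v _ => maxInc_mono (H.deleteEdges_le _) v
  have hy_mem : y ∈ univ.erase x := mem_erase.mpr ⟨(H.adj_sub hxy).ne.symm, mem_univ y⟩
  have split (f : (Fin n → Bool) → ℕ) :
      ∑ v, f v = f x + (f y + ∑ v ∈ (univ.erase x).erase y, f v) := by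
    rw [add_sum_erase _ f hy_mem, add_sum_erase _ f (mem_univ x)]
  rw [split (maxInc H'), split (maxInc H)]
  omega

theorem two_mul_ncard_edgeSet_le_sum_maxInc (H : (Q n).Subgraph) :
    2 * H.edgeSet.ncard ≤ ∑ v, maxInc H v := by
  induction hm : H.edgeSet.ncard generalizing H with
  | zero => simp
  | succ m ih =>
    obtain ⟨e, he⟩ := Set.nonempty_of_ncard_ne_zero (s := H.edgeSet) (by omega)
    obtain ⟨⟨x, y⟩, hxy : H.Adj x y, hmax⟩ := Set.exists_max_image {p : _ × _ | H.Adj p.1 p.2}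
      (fun p => dir p.1 p.2) (Set.toFinite _) (e.ind (fun a b h => ⟨(a, b), h⟩) he)
    have hcard : (H.deleteEdges {s(x, y)}).edgeSet.ncard = m := by
      rw [Subgraph.edgeSet_deleteEdges, Set.ncard_sdiff_singleton_of_mem (Subgraph.mem_edgeSet.mpr hxy), hm, Nat.add_sub_cancel]
    have := ih _ hcard
    have := sum_maxInc_deleteEdges_add_two_le hxy fun z w h => hmax (z, w) h
    omega

end Hypercube

/-- Every subgraph `G` of `Q n` of average degree `d` contains a geodesic of length at
least `d`. -/
theorem stmt0 (n : ℕ) (G : (Q n).Subgraph) (d : ℝ) (hne : G.verts.Nonempty)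
    (hd : d = 2 * G.edgeSet.ncard / G.verts.ncard) :
    ∃ (u v : Fin n → Bool) (p : (Q n).Walk u v),
      p.toSubgraph ≤ G ∧ IsGeodesic p ∧ d ≤ p.length := by
  classical
  obtain ⟨v, hv, hvmax⟩ := Set.exists_max_image G.verts (maxInc G) (Set.toFinite _) hne
  obtain ⟨u, p, hpG, hp, hlen⟩ := exists_isIncGeodesic_length_eq_maxInc hv
  refine ⟨u, v, p, hpG, hp.isGeodesic, ?_⟩
  have hsum : 2 * G.edgeSet.ncard ≤ G.verts.ncard * maxInc G v :=
    calc 2 * G.edgeSet.ncard ≤ ∑ w, maxInc G w := two_mul_ncard_edgeSet_le_sum_maxInc G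
      _ = ∑ w ∈ G.verts.toFinset, maxInc G w :=
        (sum_subset (subset_univ _) fun w _ hw =>
          by_contra (hw ∘ Set.mem_toFinset.mpr ∘ mem_verts_of_maxInc_ne_zero)).symm
      _ ≤ G.verts.toFinset.card * maxInc G v :=
        sum_le_card_nsmul _ _ _ fun w hw => hvmax w (Set.mem_toFinset.mp hw)
      _ = G.verts.ncard * maxInc G v := by rw [Set.ncard_eq_toFinset_card']
  have hV : (0 : ℝ) < G.verts.ncard := by exact_mod_cast (Set.ncard_pos (Set.toFinite _)).mpr hne
  rw [hd, hlen, div_le_iff₀ hV]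
  exact_mod_cast hsum.trans_eq (mul_comm _ _)
end

section
/- Every subgraph G of Q_n with average degree d contains two vertices at Hamming distance at least d apart. -/
open SimpleGraph Finset
open scoped symmDiff

/-!
For a duplicate-free list `l` of coordinates, `reach G l v` is the length of a longest path
of `G` from `v` that flips coordinates in the order of `l`, each at most once; its endpoint
is therefore at Hamming distance exactly `reach G l v` from `v`. Prepending a coordinate `i`
to `l` lets each `i`-edge `{v, v'}` of `G` extend the best path from `v'` by a first step
from `v`, and vice versa, so `∑ v, reach G l v` grows by at least twice the number of
`i`-edges. Running through all coordinates, the sum reaches `2 |E(G)|`, hence some vertex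
has `reach` at least the average degree.
-/

open Function

section Flip

variable {ι : Type*} [DecidableEq ι]

def flipAt (i : ι) (x : ι → Bool) : ι → Bool := update x i (!x i)

@[simp] lemma flipAt_same (i : ι) (x : ι → Bool) : flipAt i x i = !x i := by
  simp [flipAt]

lemma flipAt_of_ne {i j : ι} (x : ι → Bool) (h : j ≠ i) : flipAt i x j = x j := by
  simp [flipAt, h]

@[simp] lemma flipAt_flipAt (i : ι) (x : ι → Bool) : flipAt i (flipAt i x) = x := by
  simp [flipAt]

lemma flipAt_left_injective (x : ι → Bool) : Injective fun i => flipAt i x := by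
  intro i j h
  by_contra hij
  simpa [flipAt_of_ne x hij] using congrFun h i

variable [Fintype ι]

lemma hammingDist_eq_hammingDist_flipAt_add_one {x y : ι → Bool} {i : ι} (h : x i ≠ y i) :
    hammingDist x y = hammingDist (flipAt i x) y + 1 := by
  have hyi : y i = !x i := Bool.eq_not.mpr h.symm
  have hsplit : (univ.filter fun j => x j ≠ y j) =
      insert i (univ.filter fun j => flipAt i x j ≠ y j) := by
    ext j
    by_cases hj : j = i
    · subst hj; simp [h]
    · simp [hj, flipAt_of_ne x hj]
  have hi : i ∉ (univ.filter fun j => flipAt i x j ≠ y j) := by simp [hyi]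
  rw [hammingDist, hsplit, card_insert_of_notMem hi, hammingDist]

lemma exists_eq_flipAt_of_hammingDist_eq_one {x y : ι → Bool} (h : hammingDist x y = 1) :
    ∃ i, y = flipAt i x := by
  obtain ⟨i, hi⟩ := card_eq_one.mp h
  refine ⟨i, funext fun j => ?_⟩
  have hj : x j ≠ y j ↔ j = i := by simpa using Finset.ext_iff.mp hi j
  by_cases hji : j = i
  · subst hji
    simpa using Bool.eq_not.mpr (hj.mpr rfl).symm
  · simpa [flipAt_of_ne x hji] using (not_not.mp (mt hj.mp hji)).symm

end Flip

section Reach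

variable {ι : Type*} [DecidableEq ι] (H : SimpleGraph (ι → Bool)) [DecidableRel H.Adj]

/-- `reach H l v` is the length of a longest path of `H` from `v` whose successive edge
directions form a subsequence of `l`. -/
def reach : List ι → (ι → Bool) → ℕ
  | [], _ => 0
  | i :: l, v =>
    if H.Adj v (flipAt i v) then max (reach l v) (reach l (flipAt i v) + 1) else reach l v

lemma reach_eq_zero_of_forall_not_adj {v : ι → Bool} (hv : ∀ w, ¬H.Adj v w) (l : List ι) :
    reach H l v = 0 := by
  induction l with
  | nil => rfl
  | cons i l ih => simp [reach, hv, ih]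

lemma exists_reachable_reach_eq_hammingDist [Fintype ι] {l : List ι} (hl : l.Nodup)
    (v : ι → Bool) :
    ∃ w, H.Reachable v w ∧ (∀ j ∉ l, w j = v j) ∧ reach H l v = hammingDist v w := by
  induction l generalizing v with
  | nil => exact ⟨v, .refl v, fun _ _ => rfl, (hammingDist_self v).symm⟩
  | cons i l ih =>
    obtain ⟨hil, hl⟩ := List.nodup_cons.mp hl
    have hstay : ∃ w, H.Reachable v w ∧ (∀ j ∉ i :: l, w j = v j) ∧
        reach H l v = hammingDist v w := by
      obtain ⟨w, hvw, hwv, hw⟩ := ih hl v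
      exact ⟨w, hvw, fun j hj => hwv j (List.not_mem_of_not_mem_cons hj), hw⟩
    simp only [reach]
    split_ifs with hadj
    · rcases max_choice (reach H l v) (reach H l (flipAt i v) + 1) with hmax | hmax <;>
        rw [hmax]
      · exact hstay
      obtain ⟨w, hvw, hwv, hw⟩ := ih hl (flipAt i v)
      have hwi : w i = !v i := by rw [hwv i hil, flipAt_same]
      refine ⟨w, hadj.reachable.trans hvw, fun j hj => ?_, ?_⟩
      · rw [List.mem_cons, not_or] at hj
        rw [hwv j hj.2, flipAt_of_ne v hj.1]
      · rw [hw, hammingDist_eq_hammingDist_flipAt_add_one (show v i ≠ w i by simp [hwi])]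
    · exact hstay

lemma sum_reach_add_card_le_sum_reach_cons [Fintype ι] (i : ι) (l : List ι) :
    ∑ v, reach H l v + #{v | H.Adj v (flipAt i v)} ≤ ∑ v, reach H (i :: l) v := by
  set f := reach H l
  have hflip : ∑ v ∈ univ.filter (fun v => H.Adj v (flipAt i v)), f (flipAt i v) =
      ∑ v ∈ univ.filter (fun v => H.Adj v (flipAt i v)), f v := by
    refine sum_nbij' (flipAt i) (flipAt i) (fun v hv => ?_) (fun v hv => ?_)
      (fun v _ => flipAt_flipAt i v) (fun v _ => flipAt_flipAt i v) (fun v _ => rfl)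
    all_goals simpa [H.adj_comm] using hv
  calc ∑ v, f v + #{v | H.Adj v (flipAt i v)}
      = ∑ v, (if H.Adj v (flipAt i v) then f (flipAt i v) else f v) +
          ∑ v, (if H.Adj v (flipAt i v) then 1 else 0) := by
        rw [sum_ite, hflip, sum_filter_add_sum_filter_not, card_filter]
    _ = ∑ v, (if H.Adj v (flipAt i v) then f (flipAt i v) + 1 else f v) := by
        rw [← sum_add_distrib]
        exact sum_congr rfl fun v _ => by split_ifs <;> rfl
    _ ≤ ∑ v, reach H (i :: l) v := sum_le_sum fun v _ => by
        simp only [reach, f]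
        split_ifs <;> omega

lemma sum_card_filter_adj_flipAt_le_sum_reach [Fintype ι] (l : List ι) :
    (l.map fun i => #{v | H.Adj v (flipAt i v)}).sum ≤ ∑ v, reach H l v := by
  induction l with
  | nil => simp
  | cons i l ih =>
    rw [List.map_cons, List.sum_cons]
    have := sum_reach_add_card_le_sum_reach_cons H i l
    omega

variable [Fintype ι] {H}

lemma card_filter_adj_flipAt (hH : ∀ x y, H.Adj x y → hammingDist x y = 1) (v : ι → Bool) :
    #{i | H.Adj v (flipAt i v)} = H.degree v := by
  have himage : H.neighborFinset v = image (fun i => flipAt i v) {i | H.Adj v (flipAt i v)} := by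
    ext w
    simp only [SimpleGraph.mem_neighborFinset, mem_image, mem_filter, mem_univ, true_and]
    constructor
    · intro h
      obtain ⟨i, rfl⟩ := exists_eq_flipAt_of_hammingDist_eq_one (hH v w h)
      exact ⟨i, h, rfl⟩
    · rintro ⟨i, h, rfl⟩
      exact h
  rw [← SimpleGraph.card_neighborFinset_eq_degree, himage,
    card_image_of_injective _ (flipAt_left_injective v)]

lemma sum_card_filter_adj_flipAt (hH : ∀ x y, H.Adj x y → hammingDist x y = 1) :
    ∑ i, #{v | H.Adj v (flipAt i v)} = 2 * #H.edgeFinset := by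
  rw [← SimpleGraph.sum_degrees_eq_twice_card_edges]
  simp only [← card_filter_adj_flipAt hH, card_filter]
  exact sum_comm

end Reach

lemma SimpleGraph.Subgraph.mem_verts_of_reachable_spanningCoe {V : Type*} {H : SimpleGraph V}
    {G : H.Subgraph} {v w : V} (h : G.spanningCoe.Reachable v w) (hv : v ∈ G.verts) :
    w ∈ G.verts := by
  obtain ⟨p⟩ := h
  induction p with
  | nil => exact hv
  | cons hadj _ ih => exact ih (G.edge_vert hadj.symm)

lemma two_mul_ncard_edgeSet_le_sum_reach {n : ℕ} (G : (Q n).Subgraph)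
    [DecidableRel G.spanningCoe.Adj] [Fintype G.verts] :
    2 * G.edgeSet.ncard ≤ ∑ v ∈ G.verts.toFinset, reach G.spanningCoe univ.toList v := calc
  2 * G.edgeSet.ncard = 2 * #G.spanningCoe.edgeFinset := by
    rw [← G.edgeSet_spanningCoe, Set.ncard_eq_toFinset_card']
    rfl
  _ = ∑ i, #{v | G.spanningCoe.Adj v (flipAt i v)} :=
    (sum_card_filter_adj_flipAt fun _ _ h => G.adj_sub h).symm
  _ ≤ ∑ v, reach G.spanningCoe univ.toList v := by
    simpa [sum_toList] using sum_card_filter_adj_flipAt_le_sum_reach G.spanningCoe univ.toList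
  _ = ∑ v ∈ G.verts.toFinset, reach G.spanningCoe univ.toList v := by
    refine (sum_subset (subset_univ _) fun v _ hv => ?_).symm
    exact reach_eq_zero_of_forall_not_adj _
      (fun w h => hv (Set.mem_toFinset.mpr (G.edge_vert h))) _

/-- (Feder–Subi) Every subgraph `G` of `Q n` of average degree `d` contains two
vertices at Hamming distance at least `d`. -/
theorem stmt4 (n : ℕ) (G : (Q n).Subgraph) (d : ℝ) (hne : G.verts.Nonempty)
    (hd : d = 2 * G.edgeSet.ncard / G.verts.ncard) :
    ∃ u ∈ G.verts, ∃ v ∈ G.verts, d ≤ hammingDist u v := by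
  classical
  set r := reach G.spanningCoe (univ : Finset (Fin n)).toList
  have hV : (G.verts.ncard : ℝ) ≠ 0 :=
    Nat.cast_ne_zero.mpr ((Set.ncard_pos G.verts.toFinite).mpr hne).ne'
  have havg : ∑ _v ∈ G.verts.toFinset, d ≤ ∑ v ∈ G.verts.toFinset, (r v : ℝ) := by
    rw [sum_const, nsmul_eq_mul, ← Set.ncard_eq_toFinset_card', hd, mul_div_cancel₀ _ hV]
    exact_mod_cast two_mul_ncard_edgeSet_le_sum_reach G
  obtain ⟨v, hv, hdv⟩ := exists_le_of_sum_le (by simpa using hne) havg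
  rw [Set.mem_toFinset] at hv
  obtain ⟨w, hvw, -, hw⟩ :=
    exists_reachable_reach_eq_hammingDist G.spanningCoe (nodup_toList univ) v
  exact ⟨v, hv, w, G.mem_verts_of_reachable_spanningCoe hvw hv, hw ▸ hdv⟩
end

section
/- Let A ⊆ P([n]) be a set family, let G be the induced subgraph of Q_n on A, and let i ∈ [n]. If G has average degree at least d and every two vertices of G are at Hamming distance less than k, then the induced subgraph G' of Q_n on the down-compressed family C_i(A) also has average degree at least d and all pairs of its vertices are at Hamming distance less than k. -/
/-!
Down-compression along `a` is a bijection `𝒜 → 𝓓 a 𝒜`, so only the edge count and the diameter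
need attention. Edges are mapped injectively into the compressed family: an edge whose two ends
contain `a` is lowered to the pair of erasures when these are not both in `𝒜` already, and every
other edge survives as it is; the two kinds cannot collide, since a surviving edge has both ends
in `𝒜` and a lowered one does not. For the diameter, any two compressed sets have a symmetric
difference contained in that of two members of `𝒜`, found among their originals and their
erasures.
-/

open Finset
open scoped symmDiff FinsetFamily

namespace Finset

variable {α : Type*} [DecidableEq α] {a : α} {s t : Finset α} {𝒜 : Finset (Finset α)}

lemma erase_symmDiff_erase_of_mem (hs : a ∈ s) (ht : a ∈ t) :
    s.erase a ∆ t.erase a = s ∆ t := by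
  ext x
  by_cases hx : x = a <;> simp [mem_symmDiff, hx, hs, ht]

lemma symmDiff_subset_erase_symmDiff_insert (a : α) (s t : Finset α) :
    s ∆ t ⊆ s.erase a ∆ insert a t := by
  intro x
  by_cases hx : x = a <;> simp [mem_symmDiff, hx]

lemma insert_symmDiff_insert_of_notMem (hs : a ∉ s) (ht : a ∉ t) :
    insert a s ∆ insert a t = s ∆ t := by
  ext x
  by_cases hx : x = a <;> simp [mem_symmDiff, hx, hs, ht]

lemma eq_erase_of_card_symmDiff_eq_one (hs : a ∈ s) (ht : a ∉ t) (h : #(s ∆ t) = 1) :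
    t = s.erase a := by
  have hst : s ∆ t = {a} := by
    obtain ⟨b, hb⟩ := card_eq_one.1 h
    have hab : a ∈ s ∆ t := mem_symmDiff.2 (Or.inl ⟨hs, ht⟩)
    rw [hb, mem_singleton] at hab
    rw [hb, hab]
  rw [← symmDiff_symmDiff_cancel_left (a := s) (b := t), hst]
  ext x
  by_cases hx : x = a <;> simp [mem_symmDiff, hx, hs]

/-- Each edge of the subgraph of the hypercube induced on `𝒜` is counted twice here. -/
def hammingEdges (𝒜 : Finset (Finset α)) : Finset (Finset α × Finset α) :=
  {p ∈ 𝒜 ×ˢ 𝒜 | #(p.1 ∆ p.2) = 1}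

lemma mem_hammingEdges {p : Finset α × Finset α} :
    p ∈ hammingEdges 𝒜 ↔ p.1 ∈ 𝒜 ∧ p.2 ∈ 𝒜 ∧ #(p.1 ∆ p.2) = 1 := by
  simp [hammingEdges, and_assoc]

end Finset

namespace Down

variable {α : Type*} [DecidableEq α] {a : α} {s t : Finset α} {𝒜 : Finset (Finset α)}

lemma mem_compression_of_adjacent (hs : s ∈ 𝒜) (ht : t ∈ 𝒜) (hst : #(s ∆ t) = 1)
    (h : a ∈ s → a ∈ t → s.erase a ∈ 𝒜) : s ∈ 𝓓 a 𝒜 := by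
  refine mem_compression.2 (Or.inl ⟨hs, ?_⟩)
  by_cases has : a ∈ s
  · by_cases hat : a ∈ t
    · exact h has hat
    · rwa [← eq_erase_of_card_symmDiff_eq_one has hat hst]
  · rwa [erase_eq_of_notMem has]

def compressEdge (a : α) (𝒜 : Finset (Finset α)) (p : Finset α × Finset α) :
    Finset α × Finset α :=
  if a ∈ p.1 ∧ a ∈ p.2 ∧ ¬(p.1.erase a ∈ 𝒜 ∧ p.2.erase a ∈ 𝒜) then (p.1.erase a, p.2.erase a)
  else p

lemma compressEdge_mem_hammingEdges {p : Finset α × Finset α} (hp : p ∈ hammingEdges 𝒜) :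
    compressEdge a 𝒜 p ∈ hammingEdges (𝓓 a 𝒜) := by
  obtain ⟨s, t⟩ := p
  obtain ⟨hs, ht, hst⟩ := mem_hammingEdges.1 hp
  rw [compressEdge, mem_hammingEdges]
  split_ifs with hmove
  · obtain ⟨has, hat, -⟩ := hmove
    exact ⟨erase_mem_compression hs, erase_mem_compression ht,
      by rwa [erase_symmDiff_erase_of_mem has hat]⟩
  · push Not at hmove
    exact ⟨mem_compression_of_adjacent hs ht hst fun has hat ↦ (hmove has hat).1,
      mem_compression_of_adjacent ht hs (by rwa [symmDiff_comm])
        fun hat has ↦ (hmove has hat).2, hst⟩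

lemma injOn_compressEdge : Set.InjOn (compressEdge a 𝒜) (hammingEdges 𝒜) := by
  rintro ⟨s, t⟩ hp ⟨s', t'⟩ hq heq
  obtain ⟨hs, ht, -⟩ := mem_hammingEdges.1 hp
  obtain ⟨hs', ht', -⟩ := mem_hammingEdges.1 hq
  simp only [compressEdge] at heq
  split_ifs at heq with h h' h'
  · obtain ⟨e₁, e₂⟩ := Prod.mk.inj heq
    rw [erase_injOn' a h.1 h'.1 e₁, erase_injOn' a h.2.1 h'.2.1 e₂]
  · obtain ⟨e₁, e₂⟩ := Prod.mk.inj heq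
    exact absurd ⟨e₁ ▸ hs', e₂ ▸ ht'⟩ h.2.2
  · obtain ⟨e₁, e₂⟩ := Prod.mk.inj heq
    exact absurd ⟨e₁ ▸ hs, e₂ ▸ ht⟩ h'.2.2
  · exact heq

lemma card_hammingEdges_le_card_hammingEdges_compression (a : α) (𝒜 : Finset (Finset α)) :
    #(hammingEdges 𝒜) ≤ #(hammingEdges (𝓓 a 𝒜)) :=
  card_le_card_of_injOn _ (fun _ hp ↦ compressEdge_mem_hammingEdges hp) injOn_compressEdge

lemma exists_symmDiff_subset_of_mem_compression (hs : s ∈ 𝓓 a 𝒜) (ht : t ∈ 𝓓 a 𝒜) :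
    ∃ s' ∈ 𝒜, ∃ t' ∈ 𝒜, s ∆ t ⊆ s' ∆ t' := by
  rw [mem_compression] at hs ht
  rcases hs with ⟨hs, hs'⟩ | ⟨hs, hs'⟩ <;> rcases ht with ⟨ht, ht'⟩ | ⟨ht, ht'⟩
  · exact ⟨s, hs, t, ht, subset_rfl⟩
  · exact ⟨_, hs', _, ht', symmDiff_subset_erase_symmDiff_insert a s t⟩
  · exact ⟨_, hs', _, ht', by
      rw [symmDiff_comm s, symmDiff_comm (insert a s)]
      exact symmDiff_subset_erase_symmDiff_insert a t s⟩
  · have has : a ∉ s := fun h ↦ hs (insert_eq_of_mem h ▸ hs')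
    have hat : a ∉ t := fun h ↦ ht (insert_eq_of_mem h ▸ ht')
    exact ⟨_, hs', _, ht', (insert_symmDiff_insert_of_notMem has hat).ge⟩

end Down

/-- Compression preserves average degree and small diameter: if the subgraph of `Q n`
induced on a family `𝒜` of subsets of `[n]` has average degree at least `d` (stated via
ordered adjacent pairs: `2|E| ≥ d|𝒜|`) and all pairs of its vertices are at Hamming
distance (= size of symmetric difference) less than `k`, then the same holds for the
subgraph induced on the down-compressed family `C_i(𝒜)`. -/
theorem stmt6 (n : ℕ) (𝒜 : Finset (Finset (Fin n))) (i : Fin n) (d : ℝ) (k : ℕ)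
    (havg : d * (𝒜.card : ℝ) ≤
      (((𝒜 ×ˢ 𝒜).filter fun p => (p.1 ∆ p.2).card = 1).card : ℝ))
    (hdist : ∀ A ∈ 𝒜, ∀ B ∈ 𝒜, (A ∆ B).card < k) :
    (d * ((Down.compression i 𝒜).card : ℝ) ≤
      ((((Down.compression i 𝒜) ×ˢ (Down.compression i 𝒜)).filter
        fun p => (p.1 ∆ p.2).card = 1).card : ℝ)) ∧
    ∀ A ∈ Down.compression i 𝒜, ∀ B ∈ Down.compression i 𝒜, (A ∆ B).card < k := by
  refine ⟨?_, fun A hA B hB ↦ ?_⟩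
  · rw [Down.card_compression]
    exact havg.trans <| Nat.cast_le.2 <|
      Down.card_hammingEdges_le_card_hammingEdges_compression i 𝒜
  · obtain ⟨A', hA', B', hB', hsub⟩ := Down.exists_symmDiff_subset_of_mem_compression hA hB
    exact (card_le_card hsub).trans_lt (hdist A' hA' B' hB')
end

section
/- (Katona) Let k, t be positive integers and let A ⊆ [n]^(k) be a t-intersecting family of k-element subsets of [n]. Then |∂^(t)(A)| ≥ |A|, where ∂^(t) denotes the t-fold iterated shadow. -/
/-!
Shifting reduces the theorem to shifted families: replacing `j` by a smaller `i` in the members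
where this is possible (the `{i}`, `{j}` UV-compression) keeps the family `t`-intersecting and of
the same size, does not enlarge any iterated shadow, and lowers the total weight `∑ A, ∑ x ∈ A, x`.

A shifted family contains every set below one of its members in the Gale order. Combined with
`t`-intersection this gives Frankl's lemma: every member `A` has some `j ≥ t` with at least `j`
elements below `2j - t`. For the least such `j` (the pivot) exactly `j` elements of `A` lie below
`2j - t`, and `A ↦ A ∆ [0, 2j - t)` is injective. Its image lies in `∂^[t] 𝒜`: adding back the
first `t` elements of `A` gives a set of size `#A` below `A` in the Gale order, hence in `𝒜`.
-/

open Finset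
open scoped symmDiff FinsetFamily

namespace Katona

variable {n : ℕ}

def initSeg (n m : ℕ) : Finset (Fin n) := {x | (x : ℕ) < m}

@[simp] lemma mem_initSeg {m : ℕ} {x : Fin n} : x ∈ initSeg n m ↔ (x : ℕ) < m := by
  simp [initSeg]

lemma initSeg_mono : Monotone (initSeg n) := fun _ _ h _ hx => by
  rw [mem_initSeg] at hx ⊢; omega

lemma card_initSeg (m : ℕ) : #(initSeg n m) = min n m := Fin.card_filter_val_lt

lemma inter_initSeg_inter_initSeg (A : Finset (Fin n)) (m m' : ℕ) :
    A ∩ initSeg n m ∩ initSeg n m' = A ∩ initSeg n (min m m') := by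
  ext x; simp only [mem_inter, mem_initSeg, lt_min_iff, and_assoc]

lemma inter_initSeg_of_le (A : Finset (Fin n)) {m : ℕ} (h : n ≤ m) : A ∩ initSeg n m = A :=
  inter_eq_left.2 fun x _ => mem_initSeg.2 (x.isLt.trans_le h)

lemma card_inter_initSeg_mono (A : Finset (Fin n)) {m m' : ℕ} (h : m ≤ m') :
    #(A ∩ initSeg n m) ≤ #(A ∩ initSeg n m') :=
  card_le_card (inter_subset_inter_left (initSeg_mono h))

lemma card_inter_initSeg_le (A : Finset (Fin n)) (m : ℕ) : #(A ∩ initSeg n m) ≤ min n m :=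
  card_initSeg (n := n) m ▸ card_le_card inter_subset_right

lemma card_initSeg_sdiff (A : Finset (Fin n)) (m : ℕ) :
    #(initSeg n m \ A) = min n m - #(A ∩ initSeg n m) := by
  rw [card_sdiff, card_initSeg]

lemma card_inter_initSeg_succ_le (A : Finset (Fin n)) (m : ℕ) :
    #(A ∩ initSeg n (m + 1)) ≤ #(A ∩ initSeg n m) + 1 := by
  have hsub : (A ∩ initSeg n (m + 1)) \ (A ∩ initSeg n m) ⊆ initSeg n (m + 1) \ initSeg n m :=
    fun x => by simp only [mem_sdiff, mem_inter, mem_initSeg]; tauto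
  calc #(A ∩ initSeg n (m + 1))
      ≤ #((A ∩ initSeg n (m + 1)) \ (A ∩ initSeg n m)) + #(A ∩ initSeg n m) :=
        card_le_card_sdiff_add_card
    _ ≤ #(initSeg n (m + 1) \ initSeg n m) + #(A ∩ initSeg n m) := by gcongr
    _ ≤ #(A ∩ initSeg n m) + 1 := by
        rw [card_sdiff_of_subset (initSeg_mono m.le_succ), card_initSeg, card_initSeg]; omega

lemma exists_card_inter_initSeg_eq (A : Finset (Fin n)) {r : ℕ} (hr : r ≤ #A) :
    ∃ m, #(A ∩ initSeg n m) = r := by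
  have hex : ∃ m, r ≤ #(A ∩ initSeg n m) := ⟨n, by rwa [inter_initSeg_of_le A le_rfl]⟩
  refine ⟨Nat.find hex, le_antisymm ?_ (Nat.find_spec hex)⟩
  cases hfind : Nat.find hex with
  | zero =>
    have := card_inter_initSeg_le A 0
    rw [_root_.min_zero] at this
    omega
  | succ m =>
    have hlt := Nat.find_min hex (m := m) (by omega)
    have hstep := card_inter_initSeg_succ_le A m
    omega

lemma exists_subset_card_inter_initSeg_eq_min (S : Finset (Fin n)) {r : ℕ} (hr : r ≤ #S) :
    ∃ T ⊆ S, #T = r ∧ ∀ m, #(T ∩ initSeg n m) = min r #(S ∩ initSeg n m) := by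
  obtain ⟨m₀, hm₀⟩ := exists_card_inter_initSeg_eq S hr
  refine ⟨S ∩ initSeg n m₀, inter_subset_left, hm₀, fun m => ?_⟩
  rw [inter_initSeg_inter_initSeg]
  rcases le_total m₀ m with h | h
  · have := card_inter_initSeg_mono S h
    rw [min_eq_left h]; omega
  · have := card_inter_initSeg_mono S h
    rw [min_eq_right h]; omega

/-- `B` precedes `A` in the Gale order: the `i`-th smallest element of `B` is at most the `i`-th
smallest element of `A`, phrased by counting elements in initial segments. -/
def GaleLE (B A : Finset (Fin n)) : Prop :=
  #B = #A ∧ ∀ m, #(A ∩ initSeg n m) ≤ #(B ∩ initSeg n m)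

def Shifted (𝒜 : Finset (Finset (Fin n))) : Prop :=
  ∀ A ∈ 𝒜, ∀ j ∈ A, ∀ i < j, i ∉ A → insert i (A.erase j) ∈ 𝒜

def weight (A : Finset (Fin n)) : ℕ := ∑ x ∈ A, (x : ℕ)

lemma weight_insert_erase_lt {A : Finset (Fin n)} {i j : Fin n} (hij : i < j) (hi : i ∉ A)
    (hj : j ∈ A) : weight (insert i (A.erase j)) < weight A := by
  rw [weight, weight, sum_insert (fun h => hi (mem_of_mem_erase h)), ← sum_erase_add A _ hj]
  have : (i : ℕ) < j := hij
  omega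

lemma card_insert_erase_inter_initSeg_le {A : Finset (Fin n)} {i j : Fin n} {m : ℕ} (hj : j ∈ A)
    (him : (i : ℕ) < m → (j : ℕ) < m) :
    #(insert i (A.erase j) ∩ initSeg n m) ≤ #(A ∩ initSeg n m) := by
  by_cases hjm : (j : ℕ) < m
  · calc #(insert i (A.erase j) ∩ initSeg n m)
        ≤ #(insert i ((A ∩ initSeg n m).erase j)) := by
          refine card_le_card fun x => ?_
          simp only [mem_inter, mem_insert, mem_erase]
          tauto
      _ ≤ #((A ∩ initSeg n m).erase j) + 1 := card_insert_le _ _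
      _ = #(A ∩ initSeg n m) := card_erase_add_one (mem_inter.2 ⟨hj, mem_initSeg.2 hjm⟩)
  · refine card_le_card fun x => ?_
    simp only [mem_inter, mem_insert, mem_erase, mem_initSeg]
    rintro ⟨rfl | ⟨-, hx⟩, hxm⟩
    · exact absurd (him hxm) hjm
    · exact ⟨hx, hxm⟩

/-- Replace the next element of `A` above `min (B \ A)` by `min (B \ A)`. -/
lemma GaleLE.exists_shift_step {A B : Finset (Fin n)} (h : GaleLE B A) (hne : A ≠ B) :
    ∃ i j, i < j ∧ i ∉ A ∧ j ∈ A ∧ GaleLE B (insert i (A.erase j)) := by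
  obtain ⟨hcard, hcount⟩ := h
  have hBA : (B \ A).Nonempty :=
    sdiff_nonempty.2 fun hBA => hne (eq_of_subset_of_card_le hBA hcard.ge).symm
  set b := (B \ A).min' hBA
  obtain ⟨hbB, hbA⟩ := mem_sdiff.1 ((B \ A).min'_mem hBA)
  have hbelow : B ∩ initSeg n b = A ∩ initSeg n b := by
    refine eq_of_subset_of_card_le (fun x hx => ?_) (hcount b)
    obtain ⟨hxB, hxb⟩ := mem_inter.1 hx
    refine mem_inter.2 ⟨by_contra fun hxA => ?_, hxb⟩
    exact not_le.2 (mem_initSeg.1 hxb) (min'_le _ _ (mem_sdiff.2 ⟨hxB, hxA⟩))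
  have hAb : {x ∈ A | b < x}.Nonempty := by
    by_contra hempty
    have hAsub : A ⊆ B ∩ initSeg n b := by
      rw [hbelow]
      intro x hx
      refine mem_inter.2 ⟨hx, mem_initSeg.2 ?_⟩
      have hxb : ¬ b < x := fun hbx => hempty ⟨x, mem_filter.2 ⟨hx, hbx⟩⟩
      have : x ≠ b := hx.ne_of_notMem hbA
      omega
    have hlt : #(B ∩ initSeg n b) < #B :=
      card_lt_card ⟨inter_subset_left, fun hsub =>
        lt_irrefl _ (mem_initSeg.1 (mem_inter.1 (hsub hbB)).2)⟩
    have := card_le_card hAsub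
    omega
  set a := {x ∈ A | b < x}.min' hAb
  obtain ⟨haA, hba⟩ := mem_filter.1 ({x ∈ A | b < x}.min'_mem hAb)
  refine ⟨b, a, hba, hbA, haA, ?_, fun m => ?_⟩
  · rw [card_insert_of_notMem fun h => hbA (mem_of_mem_erase h), card_erase_add_one haA, hcard]
  by_cases hm : (b : ℕ) < m ∧ m ≤ a
  · calc #(insert b (A.erase a) ∩ initSeg n m)
        ≤ #(insert b (B ∩ initSeg n b)) := by
          refine card_le_card fun x => ?_
          rw [hbelow]
          simp only [mem_inter, mem_insert, mem_erase, mem_initSeg]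
          rintro ⟨rfl | ⟨hxa, hxA⟩, hxm⟩
          · exact Or.inl rfl
          · refine Or.inr ⟨hxA, ?_⟩
            have hxb : x ≠ b := hxA.ne_of_notMem hbA
            by_contra hbx
            have := min'_le {x ∈ A | b < x} x (mem_filter.2 ⟨hxA, show b < x by omega⟩)
            omega
      _ ≤ #(B ∩ initSeg n m) :=
          card_le_card (insert_subset (mem_inter.2 ⟨hbB, mem_initSeg.2 hm.1⟩)
            (inter_subset_inter_left (initSeg_mono hm.1.le)))
  · exact (card_insert_erase_inter_initSeg_le haA (by omega)).trans (hcount m)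

lemma Shifted.mem_of_galeLE {𝒜 : Finset (Finset (Fin n))} (h𝒜 : Shifted 𝒜) {A B : Finset (Fin n)}
    (hA : A ∈ 𝒜) (hBA : GaleLE B A) : B ∈ 𝒜 := by
  induction hw : weight A using Nat.strong_induction_on generalizing A with
  | _ w ih =>
    by_cases hAB : A = B
    · exact hAB ▸ hA
    obtain ⟨i, j, hij, hi, hj, hstep⟩ := hBA.exists_shift_step hAB
    exact ih _ (hw ▸ weight_insert_erase_lt hij hi hj) (h𝒜 A hA j hj i hij hi) hstep rfl

/-- The witness is made of the first `t - 1` elements of `A` and the first `#A - t + 1` elements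
of its complement. -/
lemma exists_galeLE_card_inter_lt {A : Finset (Fin n)} {t : ℕ} (ht : 0 < t) (htA : t ≤ #A)
    (hsparse : ∀ j, t ≤ j → #(A ∩ initSeg n (2 * j - t)) < j) :
    ∃ B, GaleLE B A ∧ #(A ∩ B) < t := by
  have hn : 2 * #A - t < n := by
    by_contra! h
    have := hsparse #A htA
    rw [inter_initSeg_of_le A h] at this
    omega
  obtain ⟨T, hTA, hTcard, hTcount⟩ :=
    exists_subset_card_inter_initSeg_eq_min A (r := t - 1) (by omega)
  obtain ⟨C, hCA, hCcard, hCcount⟩ := exists_subset_card_inter_initSeg_eq_min Aᶜ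
    (r := #A - t + 1) (by rw [card_compl, Fintype.card_fin]; omega)
  have hAC : Disjoint A C := disjoint_of_subset_right hCA disjoint_compl_right
  have hTC : Disjoint T C := disjoint_of_subset_left hTA hAC
  refine ⟨T ∪ C, ⟨by rw [card_union_of_disjoint hTC]; omega, fun m => ?_⟩, ?_⟩
  · rw [union_inter_distrib_right, card_union_of_disjoint (hTC.mono inter_subset_left
      inter_subset_left), hTcount, hCcount, inter_comm Aᶜ, ← sdiff_eq_inter_compl,
      card_initSeg_sdiff]
    -- If `c ≥ t` elements of `A` lie below `m`, sparsity at `j = c` gives `m > 2c - t`, so the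
    -- complement of `A` has at least `c - t + 1` elements below `m`.
    have hcA := card_le_card (inter_subset_left : A ∩ initSeg n m ⊆ A)
    have hcm := card_inter_initSeg_le A m
    by_cases hc : t ≤ #(A ∩ initSeg n m)
    · have hlt := hsparse _ hc
      have hm : 2 * #(A ∩ initSeg n m) - t < m := by
        by_contra! h
        exact (card_inter_initSeg_mono A h).not_gt hlt
      have hcn : 2 * #(A ∩ initSeg n m) - t < n := by
        by_contra! h
        have := card_inter_initSeg_mono A h
        rw [inter_initSeg_of_le A le_rfl] at this
        omega
      omega
    · omega
  · rw [inter_union_distrib_left, inter_eq_right.2 hTA, disjoint_iff_inter_eq_empty.1 hAC,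
      union_empty]
    omega

def TIntersecting {α : Type*} [DecidableEq α] (t : ℕ) (𝒜 : Finset (Finset α)) : Prop :=
  ∀ A ∈ 𝒜, ∀ B ∈ 𝒜, t ≤ #(A ∩ B)

def HasPivot (t : ℕ) (A : Finset (Fin n)) : Prop :=
  ∃ j, t ≤ j ∧ j ≤ #(A ∩ initSeg n (2 * j - t))

lemma Shifted.hasPivot {𝒜 : Finset (Finset (Fin n))} {t : ℕ} (h𝒜 : Shifted 𝒜) (ht : 0 < t)
    (hint : TIntersecting t 𝒜) {A : Finset (Fin n)} (hA : A ∈ 𝒜) : HasPivot t A := by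
  by_contra hA'
  obtain ⟨B, hBA, hAB⟩ := exists_galeLE_card_inter_lt ht (by simpa using hint A hA A hA)
    fun j htj => lt_of_not_ge fun hj => hA' ⟨j, htj, hj⟩
  exact (hint A hA B (h𝒜.mem_of_galeLE hA hBA)).not_gt hAB

noncomputable def pivot (t : ℕ) (A : Finset (Fin n)) : ℕ :=
  sInf {j | t ≤ j ∧ j ≤ #(A ∩ initSeg n (2 * j - t))}

section Pivot

variable {t : ℕ} {A : Finset (Fin n)}

lemma pivot_spec (h : HasPivot t A) :
    t ≤ pivot t A ∧ pivot t A ≤ #(A ∩ initSeg n (2 * pivot t A - t)) :=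
  Nat.sInf_mem h

lemma card_inter_initSeg_lt_of_lt_pivot {j : ℕ} (htj : t ≤ j) (hj : j < pivot t A) :
    #(A ∩ initSeg n (2 * j - t)) < j :=
  lt_of_not_ge fun h => Nat.notMem_of_lt_sInf hj ⟨htj, h⟩

lemma card_inter_initSeg_lt_pivot {m : ℕ} (hm : m < 2 * pivot t A - t) :
    #(A ∩ initSeg n m) < pivot t A := by
  have hcm := card_inter_initSeg_le A m
  by_cases hJ : pivot t A ≤ t
  · omega
  · have hlt := card_inter_initSeg_lt_of_lt_pivot (t := t) (A := A) (j := pivot t A - 1)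
      (by omega) (by omega)
    have hsucc := card_inter_initSeg_succ_le A (2 * (pivot t A - 1) - t)
    have hmono := card_inter_initSeg_mono A (m := m) (m' := 2 * (pivot t A - 1) - t + 1)
      (by omega)
    omega

lemma card_inter_initSeg_pivot (h : HasPivot t A) :
    #(A ∩ initSeg n (2 * pivot t A - t)) = pivot t A := by
  obtain ⟨htJ, hJ⟩ := pivot_spec h
  have hcm := card_inter_initSeg_le A (2 * pivot t A - t)
  by_cases hJt : pivot t A ≤ t
  · omega
  · obtain ⟨p, hp⟩ : ∃ p, 2 * pivot t A - t = p + 1 := ⟨2 * pivot t A - t - 1, by omega⟩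
    have hlt := card_inter_initSeg_lt_pivot (t := t) (A := A) (m := p) (by omega)
    have hsucc := card_inter_initSeg_succ_le A p
    rw [hp] at hJ ⊢
    omega

lemma two_mul_pivot_sub_le (h : HasPivot t A) :
    2 * pivot t A - t ≤ n := by
  by_contra! hn
  have hlt := card_inter_initSeg_lt_pivot (t := t) (A := A) hn
  have hmono := card_le_card (inter_subset_left : A ∩ initSeg n (2 * pivot t A - t) ⊆ A)
  rw [inter_initSeg_of_le A le_rfl, card_inter_initSeg_pivot h] at *
  omega

lemma two_mul_card_inter_initSeg_le (h : HasPivot t A)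
    {m : ℕ} (hm : m ≤ 2 * pivot t A - t) : 2 * #(A ∩ initSeg n m) ≤ m + t := by
  have hcm := card_inter_initSeg_le A m
  rcases hm.lt_or_eq with hm | rfl
  · by_cases hc : #(A ∩ initSeg n m) ≤ t
    · omega
    · have hlt := card_inter_initSeg_lt_of_lt_pivot (t := t) (A := A) (by omega)
        (card_inter_initSeg_lt_pivot hm)
      have hm' : 2 * #(A ∩ initSeg n m) - t < m := by
        by_contra! h
        exact (card_inter_initSeg_mono A h).not_gt hlt
      omega
  · rw [card_inter_initSeg_pivot h]
    have := (pivot_spec h).1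
    omega

end Pivot

lemma symmDiff_inter_eq_sdiff {α : Type*} [DecidableEq α] {A S U : Finset α} (hU : U ⊆ S) :
    A ∆ S ∩ U = U \ A := by
  ext x
  have := @hU x
  simp only [mem_inter, mem_symmDiff, mem_sdiff]
  tauto

lemma card_inter_initSeg_le_of_sdiff_subset {A B : Finset (Fin n)} {m : ℕ} (hcard : #B = #A)
    (h : B \ initSeg n m ⊆ A \ initSeg n m) : #(A ∩ initSeg n m) ≤ #(B ∩ initSeg n m) := by
  have := card_le_card h
  have hA := card_inter_add_card_sdiff A (initSeg n m)
  have hB := card_inter_add_card_sdiff B (initSeg n m)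
  omega

section Injection

variable {t : ℕ} {A : Finset (Fin n)}

lemma galeLE_symmDiff_initSeg_pivot_union (h : HasPivot t A)
    {T : Finset (Fin n)} (hTA : T ⊆ A) (hTS : T ⊆ initSeg n (2 * pivot t A - t)) (hTcard : #T = t)
    (hTcount : ∀ m, #(T ∩ initSeg n m) = min t #(A ∩ initSeg n m)) :
    GaleLE (A ∆ initSeg n (2 * pivot t A - t) ∪ T) A := by
  set S := initSeg n (2 * pivot t A - t)
  have hSn := two_mul_pivot_sub_le h
  have hdisj : Disjoint (A ∆ S) T :=
    Disjoint.mono_right (subset_inter hTA hTS) (disjoint_symmDiff_inf _ _)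
  have hcard : #(A ∆ S ∪ T) = #A := by
    have htJ := (pivot_spec h).1
    have hJA := card_le_card (inter_subset_left : A ∩ S ⊆ A)
    rw [card_union_of_disjoint hdisj, symmDiff_def, sup_eq_union,
      card_union_of_disjoint disjoint_sdiff_sdiff, card_sdiff, card_sdiff, inter_comm S A,
      card_initSeg, card_inter_initSeg_pivot h] at *
    omega
  refine ⟨hcard, fun m => ?_⟩
  rcases le_total m (2 * pivot t A - t) with hm | hm
  · rw [union_inter_distrib_right, card_union_of_disjoint (hdisj.mono inter_subset_left
      inter_subset_left), symmDiff_inter_eq_sdiff (initSeg_mono hm), card_initSeg_sdiff, hTcount]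
    have := two_mul_card_inter_initSeg_le h hm
    have := card_inter_initSeg_le A m
    omega
  · refine card_inter_initSeg_le_of_sdiff_subset hcard fun x hx => ?_
    obtain ⟨hx, hxm⟩ := mem_sdiff.1 hx
    have hxS : x ∉ S := fun hxS => hxm (initSeg_mono hm hxS)
    refine mem_sdiff.2 ⟨?_, hxm⟩
    rcases mem_union.1 hx with hx | hx
    · exact ((mem_symmDiff.1 hx).resolve_right fun h => hxS h.1).1
    · exact absurd (hTS hx) hxS

lemma Shifted.symmDiff_initSeg_pivot_mem_shadow_iterate {𝒜 : Finset (Finset (Fin n))}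
    (h𝒜 : Shifted 𝒜) (hA : A ∈ 𝒜) (h : HasPivot t A) :
    A ∆ initSeg n (2 * pivot t A - t) ∈ ∂^[t] 𝒜 := by
  obtain ⟨htJ, hJ⟩ := pivot_spec h
  obtain ⟨T, hTA, hTcard, hTcount⟩ := exists_subset_card_inter_initSeg_eq_min A (r := t)
    (htJ.trans (hJ.trans (card_le_card inter_subset_left)))
  have hTS : T ⊆ initSeg n (2 * pivot t A - t) := by
    rw [← inter_eq_left]
    refine eq_of_subset_of_card_le inter_subset_left ?_
    rw [hTcount, card_inter_initSeg_pivot h, hTcard]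
    omega
  rw [mem_shadow_iterate_iff_exists_sdiff]
  refine ⟨_, h𝒜.mem_of_galeLE hA (galeLE_symmDiff_initSeg_pivot_union h hTA hTS hTcard hTcount),
    subset_union_left, ?_⟩
  rw [union_sdiff_left, sdiff_eq_self_of_disjoint
    (Disjoint.mono_right (subset_inter hTA hTS) (disjoint_symmDiff_inf _ _)).symm, hTcard]

/-- If the pivot of `B` were smaller, `A` and `B` would agree below `2 * pivot t B - t`. -/
lemma pivot_le_of_symmDiff_eq {B : Finset (Fin n)} (hB : HasPivot t B)
    (heq : A ∆ initSeg n (2 * pivot t A - t) = B ∆ initSeg n (2 * pivot t B - t)) :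
    pivot t A ≤ pivot t B := by
  by_contra! hlt
  obtain ⟨htJ, hJ⟩ := pivot_spec hB
  set U := initSeg n (2 * pivot t B - t)
  have hflip : ∀ (X : Finset (Fin n)) {S}, U ⊆ S → U ∩ X = U \ (X ∆ S ∩ U) := fun X S hU => by
    rw [symmDiff_inter_eq_sdiff hU, sdiff_sdiff_self_left]
  have hagree : A ∩ U = B ∩ U := by
    have hU : U ⊆ initSeg n (2 * pivot t A - t) := initSeg_mono (by omega)
    rw [inter_comm A, inter_comm B, hflip A hU, hflip B subset_rfl, heq]
  have := card_inter_initSeg_lt_of_lt_pivot (A := A) htJ hlt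
  rw [hagree] at this
  omega

lemma symmDiff_initSeg_pivot_injOn :
    {A | HasPivot t A}.InjOn
      fun A : Finset (Fin n) => A ∆ initSeg n (2 * pivot t A - t) := fun A hA B hB heq => by
  have hJ := le_antisymm (pivot_le_of_symmDiff_eq hB heq) (pivot_le_of_symmDiff_eq hA heq.symm)
  simp only at heq
  rw [hJ] at heq
  exact symmDiff_left_injective _ heq

end Injection

theorem Shifted.card_le_card_shadow_iterate {𝒜 : Finset (Finset (Fin n))} {t : ℕ}
    (h𝒜 : Shifted 𝒜) (ht : 0 < t) (hint : TIntersecting t 𝒜) : #𝒜 ≤ #(∂^[t] 𝒜) :=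
  card_le_card_of_injOn _
    (fun _ hA => h𝒜.symmDiff_initSeg_pivot_mem_shadow_iterate hA
      (h𝒜.hasPivot ht hint hA))
    (symmDiff_initSeg_pivot_injOn.mono fun _ hA => h𝒜.hasPivot ht hint hA)

section Compression

variable {α : Type*} [DecidableEq α] {i j : α}

lemma compress_singleton (hij : i ≠ j) (A : Finset α) :
    UV.compress {i} {j} A = if i ∉ A ∧ j ∈ A then insert i (A.erase j) else A := by
  simp only [UV.compress, disjoint_singleton_left, singleton_subset_iff]
  split_ifs
  · ext x
    simp only [mem_sdiff, mem_singleton, mem_insert, mem_erase]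
    grind
  · rfl

lemma card_le_card_of_insert_erase_subset {s u : Finset α} (hi : i ∉ s)
    (h : insert i (s.erase j) ⊆ u) : #s ≤ #u := by
  have := card_le_card h
  rw [card_insert_of_notMem fun h => hi (mem_of_mem_erase h)] at this
  have := pred_card_le_card_erase (s := s) (a := j)
  omega

lemma card_inter_le_card_insert_erase_inter {X Y : Finset α} (hi : i ∉ X)
    (hY : ¬(i ∉ Y ∧ j ∈ Y)) : #(X ∩ Y) ≤ #(insert i (X.erase j) ∩ Y) := by
  by_cases hiY : i ∈ Y
  · refine card_le_card_of_insert_erase_subset (j := j) (fun h => hi (mem_inter.1 h).1)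
      fun x => ?_
    simp only [mem_insert, mem_erase, mem_inter]
    rintro (rfl | ⟨hxj, hxX, hxY⟩)
    · exact ⟨Or.inl rfl, hiY⟩
    · exact ⟨Or.inr ⟨hxj, hxX⟩, hxY⟩
  · have hjY : j ∉ Y := fun hjY => hY ⟨hiY, hjY⟩
    refine card_le_card fun x => ?_
    simp only [mem_insert, mem_erase, mem_inter]
    rintro ⟨hxX, hxY⟩
    exact ⟨Or.inr ⟨hxY.ne_of_notMem hjY, hxX⟩, hxY⟩

lemma card_inter_le_card_compress_inter_compress (hij : i ≠ j) (X Y : Finset α) :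
    #(X ∩ Y) ≤ #(UV.compress {i} {j} X ∩ UV.compress {i} {j} Y) := by
  simp only [compress_singleton hij]
  split_ifs with hX hY hY
  · exact card_le_card_of_insert_erase_subset (fun h => hX.1 (mem_inter.1 h).1) fun x => by
      simp only [mem_insert, mem_erase, mem_inter]; tauto
  · exact card_inter_le_card_insert_erase_inter hX.1 hY
  · rw [inter_comm, inter_comm X]
    exact card_inter_le_card_insert_erase_inter hY.1 hX
  · exact le_rfl

lemma le_card_inter_compress (hij : i ≠ j) {t : ℕ} {X Y : Finset α} (hXY : t ≤ #(X ∩ Y))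
    (hCXY : t ≤ #(UV.compress {i} {j} X ∩ Y)) : t ≤ #(X ∩ UV.compress {i} {j} Y) := by
  by_cases hX : i ∉ X ∧ j ∈ X
  · rw [compress_singleton hij, if_pos hX] at hCXY
    rw [compress_singleton hij]
    split_ifs with hY
    · convert hCXY using 2
      ext x
      simp only [mem_inter, mem_insert, mem_erase]
      grind
    · exact hXY
  · have := card_inter_le_card_compress_inter_compress hij X Y
    rw [compress_singleton hij X, if_neg hX] at this
    omega

lemma TIntersecting.compression (hij : i ≠ j) {t : ℕ} {𝒜 : Finset (Finset α)}
    (h : TIntersecting t 𝒜) : TIntersecting t (𝓒 {i} {j} 𝒜) := by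
  intro X hX Y hY
  rw [UV.mem_compression] at hX hY
  rcases hX with ⟨hX, hCX⟩ | ⟨-, A, hA, rfl⟩ <;> rcases hY with ⟨hY, hCY⟩ | ⟨-, B, hB, rfl⟩
  · exact h X hX Y hY
  · exact le_card_inter_compress hij (h X hX B hB) (h _ hCX B hB)
  · rw [inter_comm]
    exact le_card_inter_compress hij (h Y hY A hA) (h _ hCY A hA)
  · exact (h A hA B hB).trans (card_inter_le_card_compress_inter_compress hij A B)

lemma shadow_iterate_compression_subset (i j : α) (𝒜 : Finset (Finset α)) (s : ℕ) :
    ∂^[s] (𝓒 {i} {j} 𝒜) ⊆ 𝓒 {i} {j} (∂^[s] 𝒜) := by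
  induction s with
  | zero => exact subset_rfl
  | succ s ih =>
    rw [Function.iterate_succ_apply', Function.iterate_succ_apply']
    refine (shadow_mono ih).trans (UV.shadow_compression_subset_compression_shadow _ _ ?_)
    intro x hx
    refine ⟨j, mem_singleton_self j, ?_⟩
    rw [mem_singleton.1 hx, erase_singleton, erase_singleton]
    exact UV.isCompressed_self _ _

lemma card_shadow_iterate_compression_le (i j : α) (𝒜 : Finset (Finset α)) (s : ℕ) :
    #(∂^[s] (𝓒 {i} {j} 𝒜)) ≤ #(∂^[s] 𝒜) :=
  (card_le_card (shadow_iterate_compression_subset i j 𝒜 s)).trans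
    (UV.card_compression _ _ _).le

end Compression

lemma sum_weight_compression_lt {𝒜 : Finset (Finset (Fin n))} {i j : Fin n} (hij : i < j)
    (h : ∃ A ∈ 𝒜, UV.compress {i} {j} A ∉ 𝒜) :
    ∑ A ∈ 𝓒 {i} {j} 𝒜, weight A < ∑ A ∈ 𝒜, weight A := by
  rw [UV.compression, sum_union UV.compress_disjoint, filter_image,
    sum_image fun x hx y hy h => UV.compress_injOn (mem_coe.2 hx) (mem_coe.2 hy) h,
    ← sum_filter_add_sum_filter_not 𝒜 fun A => UV.compress {i} {j} A ∈ 𝒜]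
  obtain ⟨A, hA, hCA⟩ := h
  refine add_lt_add_right (sum_lt_sum_of_nonempty ⟨A, mem_filter.2 ⟨hA, hCA⟩⟩ fun B hB => ?_) _
  obtain ⟨hB, hCB⟩ := mem_filter.1 hB
  have hfire : i ∉ B ∧ j ∈ B := by
    by_contra hfire
    rw [compress_singleton hij.ne, if_neg hfire] at hCB
    exact hCB hB
  rw [compress_singleton hij.ne, if_pos hfire]
  exact weight_insert_erase_lt hij hfire.1 hfire.2

lemma shifted_of_forall_compress_mem {𝒜 : Finset (Finset (Fin n))}
    (h : ∀ i j : Fin n, i < j → ∀ A ∈ 𝒜, UV.compress {i} {j} A ∈ 𝒜) : Shifted 𝒜 :=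
  fun A hA j hj i hij hi => by
    simpa [compress_singleton hij.ne, hi, hj] using h i j hij A hA

lemma TIntersecting.exists_shifted {𝒜 : Finset (Finset (Fin n))} {t : ℕ}
    (hint : TIntersecting t 𝒜) : ∃ ℬ : Finset (Finset (Fin n)), Shifted ℬ ∧ TIntersecting t ℬ ∧
      #ℬ = #𝒜 ∧ ∀ s, #(∂^[s] ℬ) ≤ #(∂^[s] 𝒜) := by
  induction hw : ∑ A ∈ 𝒜, weight A using Nat.strong_induction_on generalizing 𝒜 with
  | _ w ih =>
    by_cases h𝒜 : Shifted 𝒜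
    · exact ⟨𝒜, h𝒜, hint, rfl, fun _ => le_rfl⟩
    obtain ⟨i, j, hij, A, hA, hCA⟩ :
        ∃ i j : Fin n, i < j ∧ ∃ A ∈ 𝒜, UV.compress {i} {j} A ∉ 𝒜 := by
      by_contra! hall
      exact h𝒜 (shifted_of_forall_compress_mem hall)
    obtain ⟨ℬ, hℬ, hintℬ, hcard, hshadow⟩ :=
      ih _ (hw ▸ sum_weight_compression_lt hij ⟨A, hA, hCA⟩) (hint.compression hij.ne) rfl
    exact ⟨ℬ, hℬ, hintℬ, hcard.trans (UV.card_compression _ _ _),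
      fun s => (hshadow s).trans (card_shadow_iterate_compression_le _ _ _ s)⟩

end Katona

theorem stmt7_general (n t : ℕ) (ht : 0 < t) (𝒜 : Finset (Finset (Fin n)))
    (hint : ∀ A ∈ 𝒜, ∀ B ∈ 𝒜, t ≤ (A ∩ B).card) :
    𝒜.card ≤ (Finset.shadow^[t] 𝒜).card := by
  obtain ⟨ℬ, hℬ, hintℬ, hcard, hshadow⟩ := Katona.TIntersecting.exists_shifted hint
  calc #𝒜 = #ℬ := hcard.symm
    _ ≤ #(∂^[t] ℬ) := hℬ.card_le_card_shadow_iterate ht hintℬ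
    _ ≤ #(∂^[t] 𝒜) := hshadow t

/-- (Katona) If `𝒜` is a `t`-intersecting family of `k`-element subsets of `[n]`, with
`k, t > 0`, then the `t`-fold iterated shadow of `𝒜` is at least as large as `𝒜`. -/
theorem stmt7 (n k t : ℕ) (hk : 0 < k) (ht : 0 < t) (𝒜 : Finset (Finset (Fin n)))
    (hcard : ∀ A ∈ 𝒜, A.card = k)
    (hint : ∀ A ∈ 𝒜, ∀ B ∈ 𝒜, t ≤ (A ∩ B).card) :
    𝒜.card ≤ (Finset.shadow^[t] 𝒜).card :=
  stmt7_general n t ht 𝒜 hint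
end

section
/- If Conjecture B holds for Q_n (every 2-colouring of E(Q_n) admits a path between some pair of antipodal vertices that changes colour at most once), then Norine's conjecture holds for Q_n: every antipodal 2-colouring of E(Q_n) contains a monochromatic path between two antipodal vertices. -/
open SimpleGraph Finset
open scoped symmDiff

/-- The antipodal vertex of `x` in `Q n`: flip every coordinate. -/
def antip {n : ℕ} (x : Fin n → Bool) : Fin n → Bool := fun i => !x i

/-- A 2-colouring of the edges of `Q n` is antipodal if every pair of antipodal edges
receives different colours. -/
def IsAntipodalColouring (n : ℕ) (c : Sym2 (Fin n → Bool) → Bool) : Prop :=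
  ∀ x y : Fin n → Bool, (Q n).Adj x y → c s(x, y) ≠ c s(antip x, antip y)

/-- A walk changes colour at most once under `c`: its edge list splits as a block of one
colour followed by a (possibly empty) block of the other colour. -/
def ChangesAtMostOnce {n : ℕ} (c : Sym2 (Fin n → Bool) → Bool) {u v : Fin n → Bool}
    (p : (Q n).Walk u v) : Prop :=
  ∃ (l₁ l₂ : List (Sym2 (Fin n → Bool))) (b : Bool),
    p.edges = l₁ ++ l₂ ∧ (∀ e ∈ l₁, c e = b) ∧ (∀ e ∈ l₂, c e = !b)

/-- A walk is monochromatic under `c`. -/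
def Mono {n : ℕ} (c : Sym2 (Fin n → Bool) → Bool) {u v : Fin n → Bool}
    (p : (Q n).Walk u v) : Prop :=
  ∃ b : Bool, ∀ e ∈ p.edges, c e = b

/-
The antipodal map is an automorphism of `Q n` which, for an antipodal colouring, swaps the
two colours. Split a walk `u → antip u` that changes colour at most once into a `b`-coloured
part `u → w` and a `!b`-coloured part `w → antip u`. The antipodal image of the second part
is a `b`-coloured walk `antip w → u`; followed by the first part it is a `b`-coloured walk
from `antip w` to `w`, and shortcutting it gives a monochromatic path.
-/

lemma antip_antip {n : ℕ} (x : Fin n → Bool) : antip (antip x) = x := by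
  funext i; simp [antip]

lemma Q_adj_antip {n : ℕ} {x y : Fin n → Bool} : (Q n).Adj (antip x) (antip y) ↔ (Q n).Adj x y :=
  iff_of_eq <| congrArg (· = 1) <| hammingDist_comp (fun _ => not) fun _ => Bool.not_injective

def antipHom (n : ℕ) : Q n →g Q n where
  toFun := antip
  map_rel' := Q_adj_antip.mpr

def antipWalk {n : ℕ} {u v : Fin n → Bool} (p : (Q n).Walk u v) :
    (Q n).Walk (antip u) (antip v) :=
  p.map (antipHom n)

lemma edges_antipWalk {n : ℕ} {u v : Fin n → Bool} (p : (Q n).Walk u v) :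
    (antipWalk p).edges = p.edges.map (Sym2.map antip) :=
  p.edges_map (antipHom n)

lemma Mono.bypass {n : ℕ} {c : Sym2 (Fin n → Bool) → Bool} {u v : Fin n → Bool}
    {p : (Q n).Walk u v} (hp : Mono c p) : Mono c p.bypass :=
  let ⟨b, hb⟩ := hp
  ⟨b, fun e he => hb e (p.edges_bypass_subset_edges he)⟩

namespace IsAntipodalColouring

variable {n : ℕ} {c : Sym2 (Fin n → Bool) → Bool}

lemma apply_map_antip (hc : IsAntipodalColouring n c) {e : Sym2 (Fin n → Bool)}
    (he : e ∈ (Q n).edgeSet) : c (e.map antip) = !c e := by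
  induction e with
  | h x y => exact Bool.eq_not_of_ne (hc x y he).symm

lemma forall_mem_edges_antipWalk (hc : IsAntipodalColouring n c) {u v : Fin n → Bool}
    {p : (Q n).Walk u v} {b : Bool} (hp : ∀ e ∈ p.edges, c e = b) :
    ∀ e ∈ (antipWalk p).edges, c e = !b := by
  rw [edges_antipWalk]
  intro _ hmem
  obtain ⟨e, he, rfl⟩ := List.mem_map.mp hmem
  rw [← hp e he]
  exact hc.apply_map_antip (p.edges_subset_edgeSet he)

theorem exists_mono_walk (hc : IsAntipodalColouring n c) {u : Fin n → Bool}
    {p : (Q n).Walk u (antip u)} (hp : ChangesAtMostOnce c p) :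
    ∃ (v : Fin n → Bool) (q : (Q n).Walk v (antip v)), Mono c q := by
  obtain ⟨l₁, l₂, b, hsplit, hl₁, hl₂⟩ := hp
  have hfirst : ∀ e ∈ (p.take l₁.length).edges, c e = b := by
    simpa [Walk.edges_take, hsplit] using hl₁
  have hsecond : ∀ e ∈ (p.drop l₁.length).edges, c e = !b := by
    simpa [Walk.edges_drop, hsplit] using hl₂
  refine ⟨antip (p.getVert l₁.length),
    (((antipWalk (p.drop l₁.length)).copy rfl (antip_antip u)).append (p.take l₁.length)).copy rfl
      (antip_antip _).symm, b, ?_⟩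
  intro e he
  simp only [Walk.edges_copy, Walk.edges_append, List.mem_append] at he
  rcases he with he | he
  · simpa using hc.forall_mem_edges_antipWalk hsecond e he
  · exact hfirst e he

theorem exists_mono_path (hc : IsAntipodalColouring n c) {u : Fin n → Bool}
    {p : (Q n).Walk u (antip u)} (hp : ChangesAtMostOnce c p) :
    ∃ (v : Fin n → Bool) (q : (Q n).Walk v (antip v)), q.IsPath ∧ Mono c q :=
  let ⟨v, q, hq⟩ := hc.exists_mono_walk hp
  ⟨v, q.bypass, q.bypass_isPath, hq.bypass⟩

end IsAntipodalColouring

theorem stmt13_general (n : ℕ)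
    (hB : ∀ c : Sym2 (Fin n → Bool) → Bool,
      ∃ (u : Fin n → Bool) (p : (Q n).Walk u (antip u)), p.IsPath ∧ ChangesAtMostOnce c p) :
    ∀ c : Sym2 (Fin n → Bool) → Bool, IsAntipodalColouring n c →
      ∃ (u : Fin n → Bool) (p : (Q n).Walk u (antip u)), p.IsPath ∧ Mono c p := by
  intro c hc
  obtain ⟨u, p, -, hp⟩ := hB c
  exact hc.exists_mono_path hp

/-- If Conjecture B holds for `Q n` (every 2-colouring of `E(Q n)` admits a path between
some pair of antipodal vertices that changes colour at most once), then Norine's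
conjecture holds for `Q n`: every antipodal 2-colouring of `E(Q n)` contains a
monochromatic path between two antipodal vertices. -/
theorem stmt13 (n : ℕ) (hn : 2 ≤ n)
    (hB : ∀ c : Sym2 (Fin n → Bool) → Bool,
      ∃ (u : Fin n → Bool) (p : (Q n).Walk u (antip u)), p.IsPath ∧ ChangesAtMostOnce c p) :
    ∀ c : Sym2 (Fin n → Bool) → Bool, IsAntipodalColouring n c →
      ∃ (u : Fin n → Bool) (p : (Q n).Walk u (antip u)), p.IsPath ∧ Mono c p :=
  stmt13_general n hB
end
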